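/- arXiv:2109.09291 — 6 statements merged into one kernel-verified Lean document; each statement's English description precedes it below -/
import Mathlib

section
/- A totally ordered commutative BCK-algebra (cBCK-chain) A is simple (has only the ideals {0} and A) if and only if for all x, y ∈ A with y ≠ 0 there exists n ∈ ℕ with x·yⁿ = 0. -/
/-- A commutative BCK-algebra: an algebra `(A, ·, 0)` satisfying (BCK1)–(BCK4). -/
class CBCK (A : Type*) extends Mul A, Zero A where
  bck1 : ∀ x y z : A, x * y * z = x * z * y
  bck2 : ∀ x y : A, x * (x * y) = y * (y * x)
  bck3 : ∀ x : A, x * x = 0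
  bck4 : ∀ x : A, x * 0 = x
/-- Iterated right subtraction: `x · yⁿ`. -/
def CBCK.iter {A : Type*} [CBCK A] (x y : A) : ℕ → A
  | 0 => x
  | n + 1 => CBCK.iter x y n * y
/-- An ideal of a BCK-algebra. -/
def IsIdeal {A : Type*} [Mul A] [Zero A] (I : Set A) : Prop :=
  (0 : A) ∈ I ∧ ∀ x y : A, x * y ∈ I → y ∈ I → x ∈ I

namespace CBCKaux

open CBCK

variable {A : Type*} [CBCK A]

lemma zero_mul' (x : A) : (0 : A) * x = 0 := by
  have h1 : ∀ y : A, (0 : A) * ((0 : A) * y) = 0 := by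
    intro y
    rw [bck2, bck4, bck3]
  have h2 := bck1 (0 : A) x ((0 : A) * x)
  rw [bck3, h1 x] at h2
  exact h2.symm

lemma mono {a b : A} (c : A) (h : a * b = 0) : (a * c) * (b * c) = 0 := by
  have ha : a = b * (b * a) := by
    rw [← bck2, h, bck4]
  calc (a * c) * (b * c) = ((b * (b * a)) * c) * (b * c) := by rw [← ha]
    _ = ((b * c) * (b * a)) * (b * c) := by rw [bck1 b (b * a) c]
    _ = ((b * c) * (b * c)) * (b * a) := bck1 _ _ _
    _ = 0 * (b * a) := by rw [bck3]
    _ = 0 := zero_mul' _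

lemma iter_mono {a b : A} (y : A) (h : a * b = 0) :
    ∀ n : ℕ, iter a y n * iter b y n = 0 := by
  intro n
  induction n with
  | zero => exact h
  | succ n ih => exact mono y ih

lemma iter_add (x y : A) (m n : ℕ) :
    iter x y (m + n) = iter (iter x y m) y n := by
  induction n with
  | zero => rfl
  | succ n ih => show iter x y (m + n) * y = _; rw [ih]; rfl

end CBCKaux

/-- A cBCK-chain is simple iff for all `x, y` with `y ≠ 0` there is `n` with
`x · yⁿ = 0`. -/
theorem stmt_6 {A : Type*} [CBCK A] (htot : ∀ x y : A, x * y = 0 ∨ y * x = 0) :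
    (∀ I : Set A, IsIdeal I → I = {0} ∨ I = Set.univ) ↔
    ∀ x y : A, y ≠ 0 → ∃ n : ℕ, CBCK.iter x y n = 0 := by
  constructor
  · intro hsimple x y hy
    -- the Archimedean ideal generated by y
    set I : Set A := {z | ∃ n : ℕ, CBCK.iter z y n = 0} with hI
    have hideal : IsIdeal I := by
      constructor
      · exact ⟨0, rfl⟩
      · rintro z w ⟨m, hm⟩ ⟨n, hn⟩
        refine ⟨m + n, ?_⟩
        -- iter z y m * w = iter (z*w) y m
        have key : ∀ k : ℕ, CBCK.iter z y k * w = CBCK.iter (z * w) y k := by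
          intro k
          induction k with
          | zero => rfl
          | succ k ih =>
            show CBCK.iter z y k * y * w = CBCK.iter (z * w) y k * y
            rw [CBCK.bck1, ih]
        have hle : CBCK.iter z y m * w = 0 := by rw [key m, hm]
        have := CBCKaux.iter_mono y hle n
        rw [hn] at this
        rw [CBCK.bck4] at this
        rw [CBCKaux.iter_add]
        exact this
    rcases hsimple I hideal with h | h
    · exfalso
      have hyI : y ∈ I := ⟨1, by show y * y = 0; exact CBCK.bck3 y⟩
      rw [h] at hyI
      exact hy hyI
    · have : x ∈ I := by rw [h]; trivial
      exact this
  · intro harch I hIdeal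
    by_cases h : I = {0}
    · exact Or.inl h
    · right
      -- I contains some y ≠ 0
      obtain ⟨y, hyI, hy0⟩ : ∃ y ∈ I, y ≠ 0 := by
        by_contra hc
        push_neg at hc
        apply h
        apply Set.eq_of_subset_of_subset
        · intro z hz; exact hc z hz
        · intro z hz
          rw [Set.mem_singleton_iff] at hz
          rw [hz]; exact hIdeal.1
      ext x
      simp only [Set.mem_univ, iff_true]
      obtain ⟨n, hn⟩ := harch x y hy0
      -- descend: iter x y n ∈ I → x ∈ I
      have descend : ∀ k : ℕ, CBCK.iter x y k ∈ I → x ∈ I := by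
        intro k
        induction k with
        | zero => exact id
        | succ k ih =>
          intro hk
          exact ih (hIdeal.2 _ _ hk hyI)
      apply descend n
      rw [hn]
      exact hIdeal.1
end

section
/- Let T be a simple totally ordered commutative BCK-algebra. A subset I ⊆ FS(X,T) is an ideal if and only if I = V(P(I)), where P(G) = {x ∈ X : g(x) = 0 for all g ∈ G} and V(S) = {f ∈ FS(X,T) : f(s) = 0 for all s ∈ S}. In particular, every ideal of FS(X,T) has the form V(S) for some S ⊆ X. -/
theorem CBCK.zero_mul' {A : Type*} [CBCK A] (x : A) : 0 * x = 0 := by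
  have h1 : ∀ a : A, (0 : A) * (0 * a) = 0 := by
    intro a
    rw [← CBCK.bck2, CBCK.bck4, CBCK.bck3]
  have h2 := CBCK.bck1 (0 : A) (0 * x) x
  rw [h1, CBCK.bck3] at h2
  exact h2

/-- `FS X T`: finitely supported functions from `X` to `T`. -/
def FS (X T : Type*) [CBCK T] : Type _ := {f : X → T // {x | f x ≠ 0}.Finite}

instance {X T : Type*} [CBCK T] : Mul (FS X T) :=
  ⟨fun f g => ⟨fun x => f.1 x * g.1 x,
    f.2.subset fun x hx hf => hx (by simp only [Set.mem_setOf_eq] at hf ⊢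
                                     rw [hf, CBCK.zero_mul'])⟩⟩

instance {X T : Type*} [CBCK T] : Zero (FS X T) :=
  ⟨⟨fun _ => 0, by simp⟩⟩

/-- `V S`: the functions in `FS X T` vanishing on `S`. -/
def V {X T : Type*} [CBCK T] (S : Set X) : Set (FS X T) :=
  {f | ∀ s ∈ S, f.1 s = 0}

/-- A cBCK-algebra is simple if its only ideals are `{0}` and the whole algebra. -/
def CBCK.Simple (A : Type*) [CBCK A] : Prop :=
  ∀ I : Set A, IsIdeal I → I = {0} ∨ I = Set.univ

/-- `P(G)`: the points of `X` at which every member of `G` vanishes. -/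
def Pset {X T : Type*} [CBCK T] (G : Set (FS X T)) : Set X :=
  {x | ∀ g ∈ G, g.1 x = 0}

namespace StmtAux
open CBCK

variable {A : Type*} [CBCK A]

theorem mul_self_right (x y : A) : x * y * x = 0 := by
  rw [CBCK.bck1, CBCK.bck3, CBCK.zero_mul']

theorem le_eq (x y : A) (h : x * y = 0) : y * (y * x) = x := by
  rw [← CBCK.bck2, h, CBCK.bck4]

theorem mono (x y z : A) (h : x * y = 0) : (x * z) * (y * z) = 0 := by
  have hx : y * (y * x) = x := le_eq x y h
  calc (x * z) * (y * z) = ((y * (y * x)) * z) * (y * z) := by rw [hx]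
    _ = ((y * z) * (y * x)) * (y * z) := by rw [CBCK.bck1 y (y * x) z]
    _ = ((y * z) * (y * z)) * (y * x) := CBCK.bck1 (y * z) (y * x) (y * z)
    _ = 0 := by rw [CBCK.bck3, CBCK.zero_mul']

/-- iterated multiplication `t * y * y * ⋯ * y` (`n` times). -/
def mpow {B : Type*} [Mul B] (t y : B) : ℕ → B
  | 0 => t
  | n + 1 => mpow t y n * y

theorem mpow_zero' (y : A) : ∀ n, mpow (0 : A) y n = 0
  | 0 => rfl
  | n + 1 => by rw [mpow, mpow_zero' y n, CBCK.zero_mul']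

theorem mpow_mul (a b y : A) : ∀ n, mpow (a * b) y n = mpow a y n * b
  | 0 => rfl
  | n + 1 => by rw [mpow, mpow, mpow_mul a b y n, CBCK.bck1]

theorem mpow_mono (a b y : A) (h : a * b = 0) :
    ∀ n, mpow a y n * mpow b y n = 0
  | 0 => h
  | n + 1 => by
    rw [mpow, mpow]
    exact mono _ _ y (mpow_mono a b y h n)

theorem mpow_add (a y : A) : ∀ m n, mpow a y (m + n) = mpow (mpow a y m) y n
  | m, 0 => rfl
  | m, n + 1 => by rw [mpow, ← mpow_add a y m n]; rfl

/-- the "power ideal" generated by `y`. -/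
theorem isIdeal_Iy (y : A) : IsIdeal {t : A | ∃ n, mpow t y n = 0} := by
  constructor
  · exact ⟨0, rfl⟩
  · rintro a b ⟨n, hn⟩ ⟨m, hm⟩
    refine ⟨n + m, ?_⟩
    rw [mpow_mul] at hn
    have := mpow_mono (mpow a y n) b y hn m
    rw [hm, CBCK.bck4, ← mpow_add] at this
    exact this

theorem simple_pow (hsimp : CBCK.Simple A) (x y : A) (hy : y ≠ 0) :
    ∃ n, mpow x y n = 0 := by
  rcases hsimp _ (isIdeal_Iy y) with h | h
  · exfalso
    apply hy
    have : y ∈ {t : A | ∃ n, mpow t y n = 0} := ⟨1, CBCK.bck3 y⟩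
    rw [h] at this
    exact this
  · have : x ∈ {t : A | ∃ n, mpow t y n = 0} := by rw [h]; trivial
    exact this

theorem fs_mpow_apply {X : Type*} (f g : FS X A) (x : X) :
    ∀ n, (mpow f g n).1 x = mpow (f.1 x) (g.1 x) n
  | 0 => rfl
  | n + 1 => by
    show (mpow f g n * g).1 x = mpow (f.1 x) (g.1 x) n * g.1 x
    show (mpow f g n).1 x * g.1 x = _
    rw [fs_mpow_apply f g x n]

theorem mem_of_mpow_mem {X : Type*} {I : Set (FS X A)} (hI : IsIdeal I)
    {f g : FS X A} (hg : g ∈ I) : ∀ n, mpow f g n ∈ I → f ∈ I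
  | 0, h => h
  | n + 1, h => mem_of_mpow_mem hI hg n (hI.2 _ _ h hg)

end StmtAux

/-- For `T` a simple cBCK-chain, `I ⊆ FS(X,T)` is an ideal iff `I = V(P(I))`;
in particular every ideal has the form `V(S)`. -/

theorem stmt_12 {X T : Type*} [CBCK T]
    (htot : ∀ x y : T, x * y = 0 ∨ y * x = 0) (hsimp : CBCK.Simple T)
    (I : Set (FS X T)) :
    IsIdeal I ↔ I = V (Pset I) := by
  classical
  open StmtAux in
  constructor
  · intro hI
    apply Set.Subset.antisymm
    · intro f hf x hx
      exact hx f hf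
    · -- hard direction: V(P(I)) ⊆ I
      intro f hf
      have key : ∀ s : Finset X, ∀ f : FS X T, f ∈ V (Pset I) →
          (∀ x, f.1 x ≠ 0 → x ∈ s) → f ∈ I := by
        intro s
        induction s using Finset.induction_on with
        | empty =>
          intro f hf hs
          have : f = 0 := by
            apply Subtype.ext
            funext x
            by_contra hx
            exact absurd (hs x hx) (by simp)
          rw [this]; exact hI.1
        | @insert a s' ha ih =>
          intro f hf hs
          by_cases hfa : f.1 a = 0
          · exact ih f hf (fun x hx => by
              rcases Finset.mem_insert.mp (hs x hx) with h | h
              · exact absurd (h ▸ hfa) hx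
              · exact h)
          · have hanp : a ∉ Pset I := fun h => hfa (hf a h)
            have : ∃ g ∈ I, g.1 a ≠ 0 := by
              by_contra hc
              push_neg at hc
              exact hanp (fun g hg => hc g hg)
            rcases this with ⟨g, hgI, hga⟩
            rcases simple_pow hsimp (f.1 a) (g.1 a) hga with ⟨n, hn⟩
            set f' := mpow f g n with hf'
            have hf'a : f'.1 a = 0 := by rw [hf', fs_mpow_apply]; exact hn
            have hf'V : f' ∈ V (Pset I) := by
              intro x hx
              rw [hf', fs_mpow_apply, hf x hx, mpow_zero']
            have hf'I : f' ∈ I := by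
              apply ih f' hf'V
              intro x hx
              have hx' : f.1 x ≠ 0 := by
                intro h0
                apply hx
                rw [hf', fs_mpow_apply, h0, mpow_zero']
              rcases Finset.mem_insert.mp (hs x hx') with h | h
              · exact absurd (h ▸ hf'a) hx
              · exact h
            exact mem_of_mpow_mem hI hgI n hf'I
      exact key f.2.toFinset f hf (fun x hx => f.2.mem_toFinset.mpr hx)
  · intro h
    rw [h]
    constructor
    · intro s _hs; rfl
    · intro f g hfg hg s hs
      have h1 : f.1 s * g.1 s = 0 := hfg s hs
      have h2 : g.1 s = 0 := hg s hs
      rw [h2, CBCK.bck4] at h1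
      exact h1
end

section
/- Let T be a simple totally ordered nontrivial commutative BCK-algebra. An ideal J of FS(X,T) is prime if and only if J = V(x) = {f ∈ FS(X,T) : f(x) = 0} for some x ∈ X. -/
open scoped Classical in
/-- Indicator function supported at `x` with value `t`. -/
noncomputable def chi {X T : Type*} [CBCK T] (x : X) (t : T) : FS X T :=
  ⟨fun y => if y = x then t else 0,
   (Set.finite_singleton x).subset (by
     intro y hy
     simp only [Set.mem_setOf_eq] at hy
     by_contra h
     simp only [Set.mem_singleton_iff] at h
     rw [if_neg h] at hy
     exact hy rfl)⟩

lemma chi_self {X T : Type*} [CBCK T] (x : X) (t : T) : (chi x t).1 x = t := by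
  simp [chi]

lemma chi_ne {X T : Type*} [CBCK T] {x y : X} (t : T) (h : y ≠ x) :
    (chi x t).1 y = 0 := by
  simp [chi, h]

lemma FS.mul_apply {X T : Type*} [CBCK T] (f g : FS X T) (y : X) :
    (f * g).1 y = f.1 y * g.1 y := rfl

lemma FS.zero_apply {X T : Type*} [CBCK T] (y : X) : (0 : FS X T).1 y = 0 := rfl

lemma FS.ext' {X T : Type*} [CBCK T] {f g : FS X T} (h : ∀ y, f.1 y = g.1 y) :
    f = g := Subtype.ext (funext h)

lemma chi_zero {X T : Type*} [CBCK T] (x : X) : chi x (0 : T) = 0 := by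
  apply FS.ext'
  intro y
  by_cases h : y = x
  · subst h; rw [chi_self]; rfl
  · rw [chi_ne _ h]; rfl

/-- Stripping lemma: if all the indicator functions of values of `f` belong to
an ideal `J`, then `f ∈ J`. -/
lemma strip {X T : Type*} [CBCK T] (J : Set (FS X T)) (hJ : IsIdeal J) :
    ∀ (s : Finset X) (f : FS X T), {y | f.1 y ≠ 0} ⊆ ↑s →
      (∀ y, f.1 y ≠ 0 → chi y (f.1 y) ∈ J) → f ∈ J := by
  classical
  intro s
  induction s using Finset.induction_on with
  | empty =>
    intro f hs _
    have hf : f = 0 := by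
      apply FS.ext'
      intro y
      by_contra h
      exact absurd (hs h) (by simp)
    rw [hf]; exact hJ.1
  | @insert a s ha ih =>
    intro f hs hc
    by_cases hfa : f.1 a = 0
    · refine ih f ?_ hc
      intro y hy
      have hmem := hs hy
      simp only [Finset.coe_insert, Set.mem_insert_iff] at hmem
      rcases hmem with rfl | h
      · exact absurd hfa hy
      · exact h
    · set g := f * chi a (f.1 a) with hgdef
      have hg : ∀ y, g.1 y = if y = a then 0 else f.1 y := by
        intro y
        rw [hgdef, FS.mul_apply]
        by_cases h : y = a
        · subst h; rw [chi_self, CBCK.bck3, if_pos rfl]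
        · rw [chi_ne _ h, CBCK.bck4, if_neg h]
      have hgs : {y | g.1 y ≠ 0} ⊆ ↑s := by
        intro y hy
        simp only [Set.mem_setOf_eq, hg] at hy
        by_cases h : y = a
        · rw [if_pos h] at hy; exact absurd rfl hy
        · rw [if_neg h] at hy
          have := hs hy
          simp only [Finset.coe_insert, Set.mem_insert_iff] at this
          rcases this with rfl | hh
          · exact absurd rfl h
          · exact hh
      have hgc : ∀ y, g.1 y ≠ 0 → chi y (g.1 y) ∈ J := by
        intro y hy
        have hgy := hg y
        by_cases h : y = a
        · rw [if_pos h] at hgy; exact absurd hgy hy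
        · rw [if_neg h] at hgy
          rw [hgy] at hy ⊢
          exact hc y hy
      exact hJ.2 f (chi a (f.1 a)) (ih g hgs hgc) (hc a hfa)

lemma chi_mul_chi {X T : Type*} [CBCK T] (x : X) (s u : T) :
    chi x s * chi x u = chi x (s * u) := by
  apply FS.ext'
  intro y
  rw [FS.mul_apply]
  by_cases h : y = x
  · subst h; rw [chi_self, chi_self, chi_self]
  · rw [chi_ne _ h, chi_ne _ h, chi_ne _ h, CBCK.bck3]

/-- For `T` a simple nontrivial cBCK-chain, an ideal `J` of `FS(X,T)` is prime iff
`J = V({x})` for some `x ∈ X`. -/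
theorem stmt_13 {X T : Type*} [CBCK T]
    (htot : ∀ x y : T, x * y = 0 ∨ y * x = 0) (hsimp : CBCK.Simple T)
    (hnt : ∃ t : T, t ≠ 0) (J : Set (FS X T)) (hJ : IsIdeal J) :
    (J ≠ Set.univ ∧ ∀ f g : FS X T, g * (g * f) ∈ J → f ∈ J ∨ g ∈ J) ↔
    ∃ x : X, J = V {x} := by
  constructor
  · rintro ⟨hproper, hprime⟩
    -- Step 1: there is some x and t with chi x t ∉ J
    have hex : ∃ x : X, ∃ t : T, chi x t ∉ J := by
      by_contra h
      push_neg at h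
      apply hproper
      ext f
      simp only [Set.mem_univ, iff_true]
      exact strip J hJ f.2.toFinset f (by rw [Set.Finite.coe_toFinset])
        (fun y _ => h y (f.1 y))
    obtain ⟨x, t0, hxt0⟩ := hex
    -- Step 2: for any y ≠ x, all indicators at y are in J
    have huniq : ∀ y : X, y ≠ x → ∀ s : T, chi y s ∈ J := by
      intro y hyx s
      by_contra hys
      have hmeet : chi y s * (chi y s * chi x t0) = 0 := by
        apply FS.ext'
        intro z
        rw [FS.mul_apply, FS.mul_apply, FS.zero_apply]
        by_cases hz : z = y
        · subst hz
          rw [chi_self, chi_ne _ hyx, CBCK.bck4, CBCK.bck3]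
        · rw [chi_ne _ hz, CBCK.zero_mul']
      have := hprime (chi x t0) (chi y s) (by rw [hmeet]; exact hJ.1)
      rcases this with h | h
      · exact hxt0 h
      · exact hys h
    refine ⟨x, ?_⟩
    apply Set.eq_of_subset_of_subset
    · -- J ⊆ V {x}
      intro f hf
      intro z hz
      have hz' : z = x := hz
      rw [hz']
      by_contra hfx
      -- chi x (f.1 x) ∈ J
      have h1 : chi x (f.1 x) * f = 0 := by
        apply FS.ext'
        intro z
        rw [FS.mul_apply, FS.zero_apply]
        by_cases hz : z = x
        · subst hz; rw [chi_self, CBCK.bck3]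
        · rw [chi_ne _ hz, CBCK.zero_mul']
      have h2 : chi x (f.1 x) ∈ J :=
        hJ.2 _ f (by rw [h1]; exact hJ.1) hf
      -- the set of s with chi x s ∈ J is an ideal of T
      have hI : IsIdeal {s : T | chi x s ∈ J} := by
        constructor
        · simp only [Set.mem_setOf_eq, chi_zero]; exact hJ.1
        · intro s u hsu hu
          simp only [Set.mem_setOf_eq] at hsu hu ⊢
          exact hJ.2 (chi x s) (chi x u) (by rw [chi_mul_chi]; exact hsu) hu
      rcases hsimp _ hI with h | h
      · have : f.1 x ∈ {s : T | chi x s ∈ J} := h2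
        rw [h] at this
        exact hfx this
      · have : t0 ∈ {s : T | chi x s ∈ J} := by rw [h]; trivial
        exact hxt0 this
    · -- V {x} ⊆ J
      intro f hf
      have hfx : f.1 x = 0 := hf x rfl
      refine strip J hJ f.2.toFinset f (by rw [Set.Finite.coe_toFinset]) ?_
      intro y hy
      have hyx : y ≠ x := by
        rintro rfl; exact hy hfx
      exact huniq y hyx (f.1 y)
  · rintro ⟨x, rfl⟩
    constructor
    · obtain ⟨t, ht⟩ := hnt
      intro h
      have : chi x t ∈ V {x} := h ▸ Set.mem_univ _
      have := this x rfl
      rw [chi_self] at this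
      exact ht this
    · intro f g hfg
      have h := hfg x rfl
      rw [FS.mul_apply, FS.mul_apply] at h
      rcases htot (f.1 x) (g.1 x) with hc | hc
      · left
        intro z hz
        simp only [Set.mem_singleton_iff] at hz
        subst hz
        rw [CBCK.bck2, hc, CBCK.bck4] at h
        exact h
      · right
        intro z hz
        simp only [Set.mem_singleton_iff] at hz
        subst hz
        rw [hc, CBCK.bck4] at h
        exact h
end

section
/- For a nontrivial commutative BCK-algebra T, the map V : P(X) → Id(FS(X,T)) sending S to V(S) = {f : f vanishes on S} is injective; if moreover T is a simple cBCK-chain, V is bijective onto the set of ideals of FS(X,T). -/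
section Aux
variable {T : Type*} [CBCK T]

lemma CBCKaux.mono_s14 {x y : T} (h : x * y = 0) (z : T) : (x * z) * (y * z) = 0 := by
  have hx : x = y * (y * x) := by
    have h2 := CBCK.bck2 x y
    rw [h, CBCK.bck4] at h2
    exact h2
  rw [hx, CBCK.bck1 y (y*x) z, CBCK.bck1 (y*z) (y*x) (y*z), CBCK.bck3, CBCK.zero_mul']

/-- iterated subtraction of `c` from `t`. -/
def iterT (t c : T) : ℕ → T
  | 0 => t
  | n+1 => iterT t c n * c

lemma iterT_zero (c : T) (n : ℕ) : iterT (0 : T) c n = 0 := by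
  induction n with
  | zero => rfl
  | succ n ih => simp [iterT, ih, CBCK.zero_mul']

lemma iterT_mono {x y : T} (h : x * y = 0) (c : T) (n : ℕ) :
    iterT x c n * iterT y c n = 0 := by
  induction n with
  | zero => exact h
  | succ n ih => exact CBCKaux.mono_s14 ih c

lemma iterT_eq_zero_of {x y : T} (h : x * y = 0) (c : T) (n : ℕ)
    (hy : iterT y c n = 0) : iterT x c n = 0 := by
  have := iterT_mono h c n
  rw [hy, CBCK.bck4] at this
  exact this

lemma iterT_swap (x y c : T) (m : ℕ) : iterT (x*y) c m = iterT x c m * y := by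
  induction m with
  | zero => rfl
  | succ m ih => show iterT (x*y) c m * c = iterT x c m * c * y
                 rw [ih, CBCK.bck1]

lemma iterT_add (x c : T) (m n : ℕ) : iterT x c (m+n) = iterT (iterT x c m) c n := by
  induction n with
  | zero => rfl
  | succ n ih => show iterT x c (m+n) * c = _
                 rw [ih]; rfl

lemma gen_ideal (c : T) : IsIdeal {x : T | ∃ n, iterT x c n = 0} := by
  constructor
  · exact ⟨0, rfl⟩
  · rintro x y ⟨m, hm⟩ ⟨n, hn⟩
    refine ⟨m + n, ?_⟩
    rw [iterT_add]
    have hle : iterT x c m * y = 0 := by rw [← iterT_swap]; exact hm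
    exact iterT_eq_zero_of hle c n hn

lemma simple_absorb (hs : CBCK.Simple T) {c : T} (hc : c ≠ 0) (t : T) :
    ∃ n, iterT t c n = 0 := by
  rcases hs _ (gen_ideal c) with h | h
  · exfalso
    have : c ∈ {x : T | ∃ n, iterT x c n = 0} := ⟨1, CBCK.bck3 c⟩
    rw [h] at this
    exact hc this
  · have : t ∈ {x : T | ∃ n, iterT x c n = 0} := h ▸ Set.mem_univ t
    exact this

variable {X : Type*}

/-- iterated subtraction in FS. -/
def iterFS (f g : FS X T) : ℕ → FS X T
  | 0 => f
  | n+1 => iterFS f g n * g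

lemma iterFS_apply (f g : FS X T) (n : ℕ) (x : X) :
    (iterFS f g n).1 x = iterT (f.1 x) (g.1 x) n := by
  induction n with
  | zero => rfl
  | succ n ih => show (iterFS f g n).1 x * g.1 x = _
                 rw [ih]; rfl

lemma ideal_peel {I : Set (FS X T)} (hI : IsIdeal I) {f g : FS X T} (hg : g ∈ I)
    (n : ℕ) (h : iterFS f g n ∈ I) : f ∈ I := by
  induction n with
  | zero => exact h
  | succ n ih => exact ih (hI.2 _ _ h hg)

end Aux


/-- For nontrivial `T`, the map `V : P(X) → Id(FS(X,T))` is injective; if moreover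
`T` is a simple cBCK-chain, it is bijective onto the set of ideals. -/
theorem stmt_14 {X T : Type*} [CBCK T] (hnt : ∃ t : T, t ≠ 0) :
    Function.Injective (fun S : Set X => (V S : Set (FS X T))) ∧
    ((∀ x y : T, x * y = 0 ∨ y * x = 0) → CBCK.Simple T →
      ∀ I : Set (FS X T), IsIdeal I → ∃ S : Set X, V S = I) := by
  classical
  constructor
  · -- injectivity
    have key : ∀ S₁ S₂ : Set X, (V S₁ : Set (FS X T)) = V S₂ → ∀ x ∈ S₁, x ∈ S₂ := by
      intro S₁ S₂ h x hx
      by_contra hx2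
      obtain ⟨t, ht⟩ := hnt
      set f : FS X T := ⟨fun y => if y = x then t else 0,
        (Set.finite_singleton x).subset (by
          intro y hy
          simp only [Set.mem_setOf_eq] at hy
          by_contra hyx
          exact hy (if_neg hyx))⟩ with hf
      have hf2 : f ∈ (V S₂ : Set (FS X T)) := by
        intro s hs
        have : s ≠ x := fun e => hx2 (e ▸ hs)
        simp [hf, this]
      rw [← h] at hf2
      have := hf2 x hx
      simp [hf] at this
      exact ht this
    intro S₁ S₂ h
    simp only at h
    exact Set.Subset.antisymm (key S₁ S₂ h) (key S₂ S₁ h.symm)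
  · -- surjectivity onto ideals
    intro _ hsimple I hI
    refine ⟨{x | ∀ f ∈ I, f.1 x = 0}, ?_⟩
    set S : Set X := {x | ∀ f ∈ I, f.1 x = 0} with hSdef
    apply Set.Subset.antisymm
    · -- V S ⊆ I
      have aux : ∀ F : Finset X, ∀ f : FS X T,
          (∀ x, x ∉ F → f.1 x = 0) → (∀ x ∈ F, x ∉ S) → f ∈ I := by
        intro F
        induction F using Finset.induction_on with
        | empty =>
          intro f hout _
          have : f = 0 := Subtype.ext (funext fun x => hout x (Finset.notMem_empty x))
          rw [this]
          exact hI.1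
        | insert _ _ ha ih =>
          rename_i a F
          intro f hout hS
          have haS : a ∉ S := hS a (Finset.mem_insert_self a F)
          have : ∃ g ∈ I, g.1 a ≠ 0 := by
            by_contra hcon
            push_neg at hcon
            exact haS hcon
          obtain ⟨g, hgI, hga⟩ := this
          obtain ⟨n, hn⟩ := simple_absorb hsimple hga (f.1 a)
          have hmem : iterFS f g n ∈ I := by
            apply ih
            · intro x hxF
              rw [iterFS_apply]
              by_cases hxa : x = a
              · rw [hxa]; exact hn
              · have : x ∉ insert a F := by
                  simp [hxa, hxF]
                rw [hout x this]
                exact iterT_zero _ _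
            · intro x hx
              exact hS x (Finset.mem_insert_of_mem hx)
          exact ideal_peel hI hgI n hmem
      intro f hf
      apply aux f.2.toFinset f
      · intro x hx
        rw [Set.Finite.mem_toFinset] at hx
        simpa using hx
      · intro x hx hxS
        rw [Set.Finite.mem_toFinset] at hx
        exact hx (hf x hxS)
    · -- I ⊆ V S
      intro f hfI s hs
      exact hs f hfI
end

section
/- Let T be a simple totally ordered nontrivial commutative BCK-algebra. For any subsets Y, Z ⊆ X, the join of the ideals V(Y) and V(Z) in the ideal lattice of FS(X,T) equals V(Y ∩ Z); that is, the ideal generated by V(Y) ∪ V(Z) is V(Y ∩ Z). -/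
/-- The ideal generated by a subset `G`. -/
def IdealGen {A : Type*} [Mul A] [Zero A] (G : Set A) : Set A :=
  ⋂₀ {I : Set A | IsIdeal I ∧ G ⊆ I}

/-- For `T` a simple nontrivial cBCK-chain, the join of the ideals `V(Y)` and `V(Z)`
(the ideal generated by their union) is `V(Y ∩ Z)`. -/
theorem stmt_16 {X T : Type*} [CBCK T]
    (htot : ∀ x y : T, x * y = 0 ∨ y * x = 0) (hsimp : CBCK.Simple T)
    (hnt : ∃ t : T, t ≠ 0) (Y Z : Set X) :
    IdealGen ((V Y : Set (FS X T)) ∪ V Z) = V (Y ∩ Z) := by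
  classical
  have hVideal : ∀ S : Set X, IsIdeal (V S : Set (FS X T)) := by
    intro S
    constructor
    · intro s _; rfl
    · intro f g hfg hg s hs
      have h1 : f.1 s * g.1 s = 0 := hfg s hs
      have h2 : g.1 s = 0 := hg s hs
      rw [h2, CBCK.bck4] at h1
      exact h1
  apply Set.Subset.antisymm
  · intro f hf
    exact hf (V (Y ∩ Z)) ⟨hVideal _, by
      rintro g (hg | hg) s ⟨hsY, hsZ⟩
      · exact hg s hsY
      · exact hg s hsZ⟩
  · intro f hf I ⟨hI, hsub⟩
    set g : FS X T := ⟨fun x => if x ∈ Y then 0 else f.1 x,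
      f.2.subset (by intro x hx; simp only [Set.mem_setOf_eq] at hx ⊢
                     intro h; apply hx; rw [h]; simp)⟩ with hgdef
    have hgY : g ∈ V Y := by intro s hs; simp [hgdef, hs]
    have hfgZ : f * g ∈ V Z := by
      intro s hs
      show f.1 s * g.1 s = 0
      by_cases hsY : s ∈ Y
      · have : f.1 s = 0 := hf s ⟨hsY, hs⟩
        simp [hgdef, hsY, this, CBCK.zero_mul']
      · simp [hgdef, hsY, CBCK.bck3]
    exact hI.2 f g (hsub (Or.inr hfgZ)) (hsub (Or.inl hgY))
end

section
/- Every complete atomic Boolean algebra B is isomorphic to the ideal lattice (equivalently, the congruence lattice) of some commutative BCK-algebra; specifically, if B ≅ P(X) then B is isomorphic to the ideal lattice of FS(X, ℝ⁺), where ℝ⁺ is the nonnegative reals with x·y = max{x−y, 0}. -/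
/-- The nonnegative reals. -/
def Rplus : Type := {x : ℝ // 0 ≤ x}

/-- Truncated subtraction `x · y = max {x - y, 0}` on `Rplus`. -/
def rsub (x y : Rplus) : Rplus := ⟨max (x.1 - y.1) 0, le_max_right _ _⟩

noncomputable instance : CBCK Rplus where
  mul := rsub
  zero := ⟨0, le_refl 0⟩
  bck1 := by
    rintro ⟨x, hx⟩ ⟨y, hy⟩ ⟨z, hz⟩
    apply Subtype.ext
    show max (max (x - y) 0 - z) 0 = max (max (x - z) 0 - y) 0
    simp only [max_def]; split_ifs <;> linarith
  bck2 := by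
    rintro ⟨x, hx⟩ ⟨y, hy⟩
    apply Subtype.ext
    show max (x - max (x - y) 0) 0 = max (y - max (y - x) 0) 0
    simp only [max_def]; split_ifs <;> linarith
  bck3 := by
    rintro ⟨x, hx⟩
    apply Subtype.ext
    show max (x - x) 0 = 0
    simp
  bck4 := by
    rintro ⟨x, hx⟩
    apply Subtype.ext
    show max (x - 0) 0 = x
    simpa using hx
section Aux

open Classical

lemma rplus_eq (a b : Rplus) (h : a.1 = b.1) : a = b := Subtype.ext h

lemma fs_mul_apply {X : Type*} (f g : FS X Rplus) (x : X) :
    (f * g).1 x = rsub (f.1 x) (g.1 x) := rfl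

lemma fs_zero_apply {X : Type*} (x : X) : (0 : FS X Rplus).1 x = 0 := rfl

lemma rplus_zero_val : ((0 : Rplus)).1 = 0 := rfl

/-- iterated subtraction: `subIter f g n = f * g * g * ⋯ * g` (n copies of g). -/
noncomputable def subIter {X : Type*} (f g : FS X Rplus) : ℕ → FS X Rplus :=
  fun n => Nat.rec f (fun _ ih => ih * g) n

lemma subIter_succ {X : Type*} (f g : FS X Rplus) (n : ℕ) :
    subIter f g (n + 1) = subIter f g n * g := rfl

lemma subIter_apply {X : Type*} (f g : FS X Rplus) (n : ℕ) (x : X) :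
    ((subIter f g n).1 x).1 = max ((f.1 x).1 - n * (g.1 x).1) 0 := by
  induction n with
  | zero =>
    simp only [subIter, Nat.cast_zero, zero_mul, sub_zero]
    exact (max_eq_left (f.1 x).2).symm
  | succ n ih =>
    have hg : 0 ≤ (g.1 x).1 := (g.1 x).2
    have hng : 0 ≤ (n : ℝ) * (g.1 x).1 := mul_nonneg (Nat.cast_nonneg n) hg
    rw [subIter_succ, fs_mul_apply]
    have : (rsub ((subIter f g n).1 x) (g.1 x)).1
        = max (((subIter f g n).1 x).1 - (g.1 x).1) 0 := rfl
    rw [this, ih, Nat.cast_succ]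
    simp only [max_def]
    split_ifs <;> linarith

/-- descending: if `f * g^n ∈ I` and `g ∈ I` then `f ∈ I`. -/
lemma subIter_mem {X : Type*} {I : Set (FS X Rplus)} (hI : IsIdeal I)
    {f g : FS X Rplus} (hg : g ∈ I) {n : ℕ} (h : subIter f g n ∈ I) : f ∈ I := by
  induction n with
  | zero => exact h
  | succ n ih => exact ih (hI.2 _ _ h hg)

def toSet {X : Type*} (I : Set (FS X Rplus)) : Set X := {x | ∃ f ∈ I, f.1 x ≠ 0}

def ofSet {X : Type*} (S : Set X) : Set (FS X Rplus) := {f | ∀ x, f.1 x ≠ 0 → x ∈ S}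

lemma ofSet_isIdeal {X : Type*} (S : Set X) : IsIdeal (ofSet (X := X) S) := by
  constructor
  · intro x hx; exact absurd rfl hx
  · intro f g hfg hgS x hx
    by_cases hgx : g.1 x = 0
    · apply hfg
      rw [fs_mul_apply, hgx]
      have : rsub (f.1 x) 0 = f.1 x := CBCK.bck4 (f.1 x)
      rw [this]; exact hx
    · exact hgS x hgx

lemma one_ne_zero_rplus : (⟨1, zero_le_one⟩ : Rplus) ≠ 0 := by
  intro h
  have := congrArg Subtype.val h
  exact one_ne_zero this

lemma toSet_ofSet {X : Type*} (S : Set X) : toSet (ofSet (X := X) S) = S := by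
  ext x
  constructor
  · rintro ⟨f, hf, hfx⟩; exact hf x hfx
  · intro hx
    classical
    refine ⟨⟨fun y => if y = x then ⟨1, zero_le_one⟩ else 0, ?_⟩, ?_, ?_⟩
    · apply Set.Finite.subset (Set.finite_singleton x)
      intro y hy
      simp only [Set.mem_setOf_eq] at hy
      by_contra hyx
      simp only [Set.mem_singleton_iff] at hyx
      exact hy (if_neg hyx)
    · intro y hy
      by_cases hyx : y = x
      · exact hyx ▸ hx
      · exact absurd (if_neg hyx) hy
    · simp only [if_pos rfl]
      exact one_ne_zero_rplus

lemma mem_of_supp_sub {X : Type*} {I : Set (FS X Rplus)} (hI : IsIdeal I) :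
    ∀ (T : Finset X) (f : FS X Rplus), (∀ x, f.1 x ≠ 0 → x ∈ T) →
      (∀ x, f.1 x ≠ 0 → x ∈ toSet I) → f ∈ I := by
  classical
  intro T
  induction T using Finset.induction_on with
  | empty =>
    intro f hsupp _
    have : f = 0 := by
      apply Subtype.ext
      funext x
      by_contra hx
      exact absurd (hsupp x hx) (Finset.notMem_empty x)
    exact this ▸ hI.1
  | insert a T hnotmem ih =>
    intro f hsupp hS
    by_cases ha : f.1 a = 0
    · refine ih f (fun x hx => ?_) hS
      rcases Finset.mem_insert.1 (hsupp x hx) with h | h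
      · exact absurd (h ▸ ha) hx
      · exact h
    · obtain ⟨g, hgI, hga⟩ := hS a ha
      have hgpos : 0 < (g.1 a).1 := by
        rcases lt_or_eq_of_le (g.1 a).2 with h | h
        · exact h
        · exact absurd (Subtype.ext h.symm) hga
      obtain ⟨n, hn⟩ := exists_nat_ge ((f.1 a).1 / (g.1 a).1)
      have hna : (f.1 a).1 ≤ n * (g.1 a).1 := by
        rw [div_le_iff₀ hgpos] at hn; linarith
      set h := subIter f g n with hh
      have hha : h.1 a = 0 := by
        apply Subtype.ext
        rw [subIter_apply, rplus_zero_val]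
        exact max_eq_right (by linarith)
      have hsub : ∀ x, h.1 x ≠ 0 → f.1 x ≠ 0 := by
        intro x hx hfx
        apply hx
        apply Subtype.ext
        rw [subIter_apply, rplus_zero_val, hfx, rplus_zero_val]
        have : 0 ≤ (n : ℝ) * (g.1 x).1 := mul_nonneg (Nat.cast_nonneg n) (g.1 x).2
        exact max_eq_right (by linarith)
      have hmem : h ∈ I := by
        refine ih h (fun x hx => ?_) (fun x hx => hS x (hsub x hx))
        rcases Finset.mem_insert.1 (hsupp x (hsub x hx)) with heq | hmem
        · exact absurd (heq ▸ hha) hx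
        · exact hmem
      exact subIter_mem hI hgI hmem

lemma ideal_eq_ofSet {X : Type*} {I : Set (FS X Rplus)} (hI : IsIdeal I) :
    I = ofSet (toSet I) := by
  classical
  apply Set.Subset.antisymm
  · intro f hf x hx; exact ⟨f, hf, hx⟩
  · intro f hf
    exact mem_of_supp_sub hI f.2.toFinset f
      (fun x hx => f.2.mem_toFinset.2 hx) hf

/-- the ideal lattice of `FS X Rplus` is order-isomorphic to `Set X`. -/
noncomputable def idealIso (X : Type*) : {I : Set (FS X Rplus) // IsIdeal I} ≃o Set X where
  toFun I := toSet I.1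
  invFun S := ⟨ofSet S, ofSet_isIdeal S⟩
  left_inv I := Subtype.ext (ideal_eq_ofSet I.2).symm
  right_inv S := toSet_ofSet S
  map_rel_iff' := by
    rintro ⟨I, hI⟩ ⟨J, hJ⟩
    constructor
    · intro h
      show I ⊆ J
      rw [ideal_eq_ofSet hI, ideal_eq_ofSet hJ]
      intro f hf x hx
      exact h (hf x hx)
    · rintro h x ⟨f, hf, hfx⟩
      exact ⟨f, h hf, hfx⟩

/-- a complete atomic Boolean algebra is isomorphic to the powerset of its atoms. -/
noncomputable def atomsIso (B : Type*) [CompleteAtomicBooleanAlgebra B] :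
    B ≃o Set {a : B // IsAtom a} where
  toFun b := {a | a.1 ≤ b}
  invFun S := sSup ((↑) '' S)
  left_inv b := by
    show sSup _ = b
    have : ((↑) '' {a : {a : B // IsAtom a} | a.1 ≤ b}) = {a : B | IsAtom a ∧ a ≤ b} := by
      ext c
      constructor
      · rintro ⟨⟨a, ha⟩, hle, rfl⟩; exact ⟨ha, hle⟩
      · rintro ⟨hc, hle⟩; exact ⟨⟨c, hc⟩, hle, rfl⟩
    rw [this]
    exact sSup_atoms_le_eq b
  right_inv S := by
    show {a : {a : B // IsAtom a} | a.1 ≤ sSup _} = S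
    ext a
    simp only [Set.mem_setOf_eq]
    rw [sSup_image]
    constructor
    · intro h
      obtain ⟨x, hx⟩ := (IsAtom.le_iSup a.2).1 h
      obtain ⟨hxS, hax⟩ := (IsAtom.le_iSup a.2).1 hx
      rcases (x.2.le_iff).1 hax with h0 | heq
      · exact absurd h0 a.2.1
      · exact Subtype.ext heq ▸ hxS
    · intro h
      exact le_biSup _ h
  map_rel_iff' := by
    intro b c
    constructor
    · intro h
      exact BooleanAlgebra.le_iff_atom_le_imp.2 fun a ha hab => h (show (⟨a, ha⟩ : {a : B // IsAtom a}).1 ≤ b from hab)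
    · intro h a ha
      exact le_trans ha h

end Aux

/-- Every complete atomic Boolean algebra `B` is isomorphic to the ideal lattice
(equivalently, the congruence lattice) of a commutative BCK-algebra: `B` is
isomorphic to the powerset of its atoms, and whenever `B ≅ P(X)`, `B` is isomorphic
to the ideal lattice of `FS(X, ℝ⁺)`. -/
theorem stmt_19 {B : Type*} [CompleteAtomicBooleanAlgebra B] :
    Nonempty (B ≃o Set {a : B // IsAtom a}) ∧
    ∀ (X : Type*), (B ≃o Set X) →
      Nonempty (B ≃o {I : Set (FS X Rplus) // IsIdeal I}) := by
  constructor
  · exact ⟨atomsIso B⟩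
  · intro X e
    exact ⟨e.trans (idealIso X).symm⟩
end
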